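/- (Lyapunov inequality underlying Theorem 4.6, Case (L4)) Let Q^{(m+1)} be a conservative Q-matrix on S and suppose Q(x) = Q^{(m+1)} for every x with |x| ≥ α_m, where α_m > 0. Suppose ρ, h : ℝ^d → (0,∞) are twice continuously differentiable, there exist r0 > 0 and β ∈ ℝ^N with ℒ^{(i)}ρ(x) ≤ β_i h(x) for all |x| > r0 and i ∈ S, and ℒ^{(i)}h(x)/h(x) → 0 as |x| → ∞ for every i ∈ S. Suppose there exist c > 0 and ξ ∈ ℝ^N with ξ_i > 0 for all i such that (Q^{(m+1)}ξ)_i = −c − β_i for every i. Then there exists r1 > max(r0, α_m) such that the function V(x,i) = ρ(x) + ξ_i h(x) satisfies 𝒜V(x,i) ≤ −(c/2) h(x) < 0 for all |x| > r1 and all i ∈ S. -/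

import Mathlib

open scoped BigOperators
open Filter

/-! On `‖x‖ ≥ αm` the switching part of `𝒜V(x,i)` is `(Qm ξ)_i h(x) = -(c + β_i) h(x)`, which
absorbs the bound `β_i h(x)` on `ℒ^{(i)}ρ(x)` and leaves `-c h(x)`. The remaining term
`ξ_i ℒ^{(i)}h(x)` is at most `(c/2) h(x)` far out, because `ℒ^{(i)}h / h → 0` and `S` is finite. -/

/-- The diffusion generator `ℒ^{(i)}f(x) = ⟨b(x,i), ∇f(x)⟩ + (1/2) tr(a(x,i) ∇²f(x))`
in a fixed environment, expressed via Fréchet derivatives on Euclidean space. -/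
noncomputable def diffGen {d : ℕ}
    (b : EuclideanSpace ℝ (Fin d) → EuclideanSpace ℝ (Fin d))
    (a : EuclideanSpace ℝ (Fin d) → Matrix (Fin d) (Fin d) ℝ)
    (f : EuclideanSpace ℝ (Fin d) → ℝ) (x : EuclideanSpace ℝ (Fin d)) : ℝ :=
  fderiv ℝ f x (b x) +
    (1 / 2) * ∑ k, ∑ l, a x k l *
      fderiv ℝ (fun y => fderiv ℝ f y (EuclideanSpace.single l 1)) x
        (EuclideanSpace.single k 1)

/-- The full generator of the regime-switching diffusion:
`𝒜V(x,i) = ℒ^{(i)}V(·,i)(x) + Σ_{j≠i} q_{ij}(x)(V(x,j) − V(x,i))`. -/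
noncomputable def hybridGen {N d : ℕ}
    (b : EuclideanSpace ℝ (Fin d) → Fin N → EuclideanSpace ℝ (Fin d))
    (a : EuclideanSpace ℝ (Fin d) → Fin N → Matrix (Fin d) (Fin d) ℝ)
    (Q : EuclideanSpace ℝ (Fin d) → Matrix (Fin N) (Fin N) ℝ)
    (V : EuclideanSpace ℝ (Fin d) → Fin N → ℝ)
    (x : EuclideanSpace ℝ (Fin d)) (i : Fin N) : ℝ :=
  diffGen (fun y => b y i) (fun y => a y i) (fun y => V y i) x +
    ∑ j ∈ Finset.univ.erase i, Q x i j * (V x j - V x i)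

lemma Matrix.sum_erase_mul_sub_eq_mulVec {n R : Type*} [Fintype n] [DecidableEq n] [CommRing R]
    (Q : Matrix n n R) (v : n → R) {i : n} (hrow : ∑ j, Q i j = 0) :
    ∑ j ∈ Finset.univ.erase i, Q i j * (v j - v i) = Q.mulVec v i := by
  rw [Finset.sum_erase _ (by simp), Matrix.mulVec, dotProduct]
  simp only [mul_sub, Finset.sum_sub_distrib, ← Finset.sum_mul, hrow, zero_mul, sub_zero]

lemma differentiable_fderiv_apply_of_contDiff_two {E : Type*} [NormedAddCommGroup E]
    [NormedSpace ℝ E] {f : E → ℝ} (hf : ContDiff ℝ 2 f) (e : E) :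
    Differentiable ℝ fun y => fderiv ℝ f y e :=
  ((hf.fderiv_right (m := 1) (by norm_num)).clm_apply contDiff_const).differentiable one_ne_zero

section Generator

variable {d : ℕ}

lemma diffGen_add_const_mul
    (b : EuclideanSpace ℝ (Fin d) → EuclideanSpace ℝ (Fin d))
    (a : EuclideanSpace ℝ (Fin d) → Matrix (Fin d) (Fin d) ℝ)
    {f g : EuclideanSpace ℝ (Fin d) → ℝ} (hf : ContDiff ℝ 2 f) (hg : ContDiff ℝ 2 g)
    (s : ℝ) (x : EuclideanSpace ℝ (Fin d)) :
    diffGen b a (fun y => f y + s * g y) x = diffGen b a f x + s * diffGen b a g x := by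
  have hf1 : Differentiable ℝ f := hf.differentiable two_ne_zero
  have hg1 : Differentiable ℝ g := hg.differentiable two_ne_zero
  have hfirst : ∀ y, fderiv ℝ (fun y => f y + s * g y) y = fderiv ℝ f y + s • fderiv ℝ g y :=
    fun y => ((hf1 y).hasFDerivAt.add ((hg1 y).hasFDerivAt.const_mul s)).fderiv
  have hsecond : ∀ e, fderiv ℝ (fun y => fderiv ℝ f y e + s * fderiv ℝ g y e) x =
      fderiv ℝ (fun y => fderiv ℝ f y e) x + s • fderiv ℝ (fun y => fderiv ℝ g y e) x := fun e =>
    ((differentiable_fderiv_apply_of_contDiff_two hf e x).hasFDerivAt.add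
      ((differentiable_fderiv_apply_of_contDiff_two hg e x).hasFDerivAt.const_mul s)).fderiv
  simp only [diffGen, hfirst, add_apply, smul_apply, smul_eq_mul, hsecond, mul_add,
    Finset.sum_add_distrib, Finset.mul_sum]
  ring_nf

lemma hybridGen_add_mul_eq {N : ℕ}
    (b : EuclideanSpace ℝ (Fin d) → Fin N → EuclideanSpace ℝ (Fin d))
    (a : EuclideanSpace ℝ (Fin d) → Fin N → Matrix (Fin d) (Fin d) ℝ)
    (Q : EuclideanSpace ℝ (Fin d) → Matrix (Fin N) (Fin N) ℝ)
    {ρ h : EuclideanSpace ℝ (Fin d) → ℝ} (hρ : ContDiff ℝ 2 ρ) (hh : ContDiff ℝ 2 h)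
    (ξ : Fin N → ℝ) (x : EuclideanSpace ℝ (Fin d)) (i : Fin N) (hrow : ∑ j, Q x i j = 0) :
    hybridGen b a Q (fun y j => ρ y + ξ j * h y) x i =
      diffGen (fun y => b y i) (fun y => a y i) ρ x +
        ξ i * diffGen (fun y => b y i) (fun y => a y i) h x + (Q x).mulVec ξ i * h x := by
  have hswitch : ∑ j ∈ Finset.univ.erase i, Q x i j * ((ρ x + ξ j * h x) - (ρ x + ξ i * h x)) =
      (Q x).mulVec ξ i * h x := by
    rw [← (Q x).sum_erase_mul_sub_eq_mulVec ξ hrow, Finset.sum_mul]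
    exact Finset.sum_congr rfl fun j _ => by ring
  rw [hybridGen, diffGen_add_const_mul _ _ hρ hh, hswitch]

end Generator

lemma Filter.Tendsto.eventually_le_const_mul_of_div {α : Type*} {l : Filter α} {f g : α → ℝ}
    (hfg : Tendsto (fun x => f x / g x) l (nhds 0)) (hg : ∀ x, 0 < g x) {ε : ℝ} (hε : 0 < ε) :
    ∀ᶠ x in l, f x ≤ ε * g x := by
  filter_upwards [hfg.eventually (gt_mem_nhds hε)] with x hx
  exact ((div_lt_iff₀ (hg x)).mp hx).le

lemma exists_gt_forall_norm_gt_of_eventually_comap_norm {E : Type*} [Norm E] {P : E → Prop}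
    (hP : ∀ᶠ x in comap (fun x : E => ‖x‖) atTop, P x) (r : ℝ) :
    ∃ r1, r < r1 ∧ ∀ x, r1 < ‖x‖ → P x := by
  obtain ⟨M, hM⟩ := eventually_atTop.1 (eventually_comap.1 hP)
  exact ⟨max r M + 1, by linarith [le_max_left r M],
    fun x hx => hM _ (by linarith [le_max_right r M]) x rfl⟩

theorem lyapunov_ergodicity_L4_general
    (N d : ℕ)
    (b : EuclideanSpace ℝ (Fin d) → Fin N → EuclideanSpace ℝ (Fin d))
    (a : EuclideanSpace ℝ (Fin d) → Fin N → Matrix (Fin d) (Fin d) ℝ)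
    (Q : EuclideanSpace ℝ (Fin d) → Matrix (Fin N) (Fin N) ℝ)
    (hQrow : ∀ x i, ∑ j, Q x i j = 0)
    (Qm : Matrix (Fin N) (Fin N) ℝ)
    (αm : ℝ)
    (hQeq : ∀ x : EuclideanSpace ℝ (Fin d), αm ≤ ‖x‖ → Q x = Qm)
    (ρ h : EuclideanSpace ℝ (Fin d) → ℝ)
    (hhpos : ∀ x, 0 < h x)
    (hρC2 : ContDiff ℝ 2 ρ) (hhC2 : ContDiff ℝ 2 h)
    (r0 : ℝ)
    (β : Fin N → ℝ)
    (hL : ∀ x : EuclideanSpace ℝ (Fin d), r0 < ‖x‖ → ∀ i,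
      diffGen (fun y => b y i) (fun y => a y i) ρ x ≤ β i * h x)
    (hLh : ∀ i, Tendsto (fun x => diffGen (fun y => b y i) (fun y => a y i) h x / h x)
      (Filter.comap (fun x : EuclideanSpace ℝ (Fin d) => ‖x‖) Filter.atTop) (nhds 0))
    (c : ℝ) (hc : 0 < c)
    (ξ : Fin N → ℝ) (hξ : ∀ i, 0 < ξ i)
    (hfred : ∀ i, Qm.mulVec ξ i = -c - β i) :
    ∃ r1 : ℝ, max r0 αm < r1 ∧
      ∀ x : EuclideanSpace ℝ (Fin d), r1 < ‖x‖ → ∀ i,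
        hybridGen b a Q (fun y j => ρ y + ξ j * h y) x i ≤ -(c / 2) * h x ∧
        -(c / 2) * h x < 0 := by
  have hsmall : ∀ᶠ x in comap (fun x : EuclideanSpace ℝ (Fin d) => ‖x‖) atTop, ∀ i,
      ξ i * diffGen (fun y => b y i) (fun y => a y i) h x ≤ c / 2 * h x := by
    refine eventually_all.2 fun i => ?_
    filter_upwards [(hLh i).eventually_le_const_mul_of_div hhpos (div_pos (half_pos hc) (hξ i))]
      with x hx
    calc ξ i * diffGen (fun y => b y i) (fun y => a y i) h x
        ≤ ξ i * (c / 2 / ξ i * h x) := mul_le_mul_of_nonneg_left hx (hξ i).le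
      _ = c / 2 * h x := by field_simp [(hξ i).ne']
  obtain ⟨r1, hr1, hfar⟩ := exists_gt_forall_norm_gt_of_eventually_comap_norm hsmall (max r0 αm)
  refine ⟨r1, hr1, fun x hx i => ?_⟩
  have hxr0 : r0 < ‖x‖ := by linarith [le_max_left r0 αm]
  have hxαm : αm ≤ ‖x‖ := by linarith [le_max_right r0 αm]
  rw [hybridGen_add_mul_eq b a Q hρC2 hhC2 ξ x i (hQrow x i), hQeq x hxαm, hfred i]
  have hhalf : 0 < c / 2 * h x := mul_pos (half_pos hc) (hhpos x)
  exact ⟨by linarith [hL x hxr0 i, hfar x hx i], by linarith⟩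

/-- (Lyapunov inequality underlying Theorem 4.6, Case (L4)): with
`Q(x) = Q^{(m+1)}` for `|x| ≥ α_m`, `ℒ^{(i)}ρ ≤ β_i h` for `|x| > r0`,
`ℒ^{(i)}h/h → 0` as `|x| → ∞`, and `(Q^{(m+1)}ξ)_i = −c − β_i` with `ξ ≫ 0`,
`c > 0`, there exists `r1 > max(r0, α_m)` such that `V(x,i) = ρ(x) + ξ_i h(x)`
satisfies `𝒜V(x,i) ≤ −(c/2) h(x) < 0` for all `|x| > r1` and all `i`. -/
theorem lyapunov_ergodicity_L4
    (N d : ℕ) (hN : 1 ≤ N) (hd : 1 ≤ d)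
    (b : EuclideanSpace ℝ (Fin d) → Fin N → EuclideanSpace ℝ (Fin d))
    (a : EuclideanSpace ℝ (Fin d) → Fin N → Matrix (Fin d) (Fin d) ℝ)
    (ha : ∀ x i, (a x i).PosSemidef)
    (Q : EuclideanSpace ℝ (Fin d) → Matrix (Fin N) (Fin N) ℝ)
    (hQoff : ∀ x i j, i ≠ j → 0 ≤ Q x i j)
    (hQrow : ∀ x i, ∑ j, Q x i j = 0)
    (Qm : Matrix (Fin N) (Fin N) ℝ)
    (hQmoff : ∀ i j, i ≠ j → 0 ≤ Qm i j)
    (hQmrow : ∀ i, ∑ j, Qm i j = 0)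
    (αm : ℝ) (hαm : 0 < αm)
    (hQeq : ∀ x : EuclideanSpace ℝ (Fin d), αm ≤ ‖x‖ → Q x = Qm)
    (ρ h : EuclideanSpace ℝ (Fin d) → ℝ)
    (hρpos : ∀ x, 0 < ρ x) (hhpos : ∀ x, 0 < h x)
    (hρC2 : ContDiff ℝ 2 ρ) (hhC2 : ContDiff ℝ 2 h)
    (r0 : ℝ) (hr0 : 0 < r0)
    (β : Fin N → ℝ)
    (hL : ∀ x : EuclideanSpace ℝ (Fin d), r0 < ‖x‖ → ∀ i,
      diffGen (fun y => b y i) (fun y => a y i) ρ x ≤ β i * h x)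
    (hLh : ∀ i, Tendsto (fun x => diffGen (fun y => b y i) (fun y => a y i) h x / h x)
      (Filter.comap (fun x : EuclideanSpace ℝ (Fin d) => ‖x‖) Filter.atTop) (nhds 0))
    (c : ℝ) (hc : 0 < c)
    (ξ : Fin N → ℝ) (hξ : ∀ i, 0 < ξ i)
    (hfred : ∀ i, Qm.mulVec ξ i = -c - β i) :
    ∃ r1 : ℝ, max r0 αm < r1 ∧
      ∀ x : EuclideanSpace ℝ (Fin d), r1 < ‖x‖ → ∀ i,
        hybridGen b a Q (fun y j => ρ y + ξ j * h y) x i ≤ -(c / 2) * h x ∧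
        -(c / 2) * h x < 0 :=
  lyapunov_ergodicity_L4_general N d b a Q hQrow Qm αm hQeq ρ h hhpos hρC2 hhC2 r0 β hL hLh c hc ξ
    hξ hfred
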